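/- arXiv:1803.10414 — 2 statements merged into one kernel-verified Lean document; each statement's English description precedes it below -/
import Mathlib

section
/- Let n ≥ 3 and let D_n be the n-dimensional dual cube. Let H be the subgraph of D_n induced on the union of the vertex sets of k clusters of class 0 and l clusters of class 1, where k ≥ 1 and l ≥ 1. Then H is connected. -/
open SimpleGraph Function

/-- Vertices of the `n`-dimensional dual cube: binary strings of length `2n-1`
(0-indexed positions `0, …, 2n-2`; the paper's position `i` is index `i-1`). -/
abbrev DVertex (n : ℕ) := Fin (2 * n - 1) → Bool

/-- `u` and `v` differ in exactly one bit position (index `i`, paper position `i+1`),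
subject to the dual-cube side conditions: if the differing position is one of
`1, …, n-1` (index `< n-1`) then both last bits are `0`; if it is one of
`n, …, 2n-2` (index in `[n-1, 2n-2)`) then both last bits are `1`. -/
def dualCubeRel (n : ℕ) (u v : DVertex n) : Prop :=
  ∃ i : Fin (2 * n - 1), u i ≠ v i ∧ (∀ j, j ≠ i → u j = v j) ∧
    ((i : ℕ) < n - 1 →
      ∀ j : Fin (2 * n - 1), (j : ℕ) = 2 * n - 2 → (u j = false ∧ v j = false)) ∧
    (n - 1 ≤ (i : ℕ) → (i : ℕ) < 2 * n - 2 →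
      ∀ j : Fin (2 * n - 1), (j : ℕ) = 2 * n - 2 → (u j = true ∧ v j = true))

/-- The `n`-dimensional dual cube `D_n`. -/
def DualCube (n : ℕ) : SimpleGraph (DVertex n) := SimpleGraph.fromRel (dualCubeRel n)

/-- The cluster of `D_n` containing the vertex `u`: if the last bit of `u` is `0`
it consists of all vertices agreeing with `u` on all positions `n, …, 2n-1`
(indices `≥ n-1`, which includes the last bit), and if the last bit of `u` is `1`
it consists of all vertices agreeing with `u` on positions `1, …, n-1`
(indices `< n-1`) and on the last bit. -/
def dualCluster (n : ℕ) (u : DVertex n) : Set (DVertex n) :=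
  { v | (∀ j : Fin (2 * n - 1), (j : ℕ) = 2 * n - 2 → v j = u j) ∧
        ((∀ j : Fin (2 * n - 1), (j : ℕ) = 2 * n - 2 → u j = false) →
          ∀ j : Fin (2 * n - 1), n - 1 ≤ (j : ℕ) → v j = u j) ∧
        ((∀ j : Fin (2 * n - 1), (j : ℕ) = 2 * n - 2 → u j = true) →
          ∀ j : Fin (2 * n - 1), (j : ℕ) < n - 1 → v j = u j) }

/-- `C` is a cluster of class `0` of `D_n`. -/
def IsCluster0 (n : ℕ) (C : Set (DVertex n)) : Prop :=
  ∃ u : DVertex n, (∀ j : Fin (2 * n - 1), (j : ℕ) = 2 * n - 2 → u j = false) ∧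
    C = dualCluster n u

/-- `C` is a cluster of class `1` of `D_n`. -/
def IsCluster1 (n : ℕ) (C : Set (DVertex n)) : Prop :=
  ∃ u : DVertex n, (∀ j : Fin (2 * n - 1), (j : ℕ) = 2 * n - 2 → u j = true) ∧
    C = dualCluster n u

/-- The outside neighbour of a vertex `u` of `D_n`: flip the last bit. -/
def outsideNeighbour (n : ℕ) (u : DVertex n) : DVertex n :=
  fun j => if (j : ℕ) = 2 * n - 2 then !(u j) else u j

/-- There exist `k` internally disjoint trees in `G` connecting the vertex set `S`:
`k` subgraphs of `G`, each a tree containing every vertex of `S`, which are pairwise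
edge-disjoint and whose vertex sets pairwise intersect exactly in `S`. -/
def InternallyDisjointTrees {V : Type*} (G : SimpleGraph V) (S : Set V) (k : ℕ) : Prop :=
  ∃ T : Fin k → G.Subgraph,
    (∀ i, S ⊆ (T i).verts ∧ (T i).coe.IsTree) ∧
    ∀ i j, i ≠ j → (T i).verts ∩ (T j).verts = S ∧ Disjoint (T i).edgeSet (T j).edgeSet

section Aux
variable {n : ℕ}

lemma flip_ne (u : DVertex n) (i : Fin (2 * n - 1)) :
    u ≠ Function.update u i (!(u i)) := by
  intro h
  have := congrFun h i
  simp at this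

lemma adj_flip_low (hn : 3 ≤ n) (u : DVertex n) (i : Fin (2 * n - 1))
    (hi : (i : ℕ) < n - 1) (hu : u ⟨2 * n - 2, by omega⟩ = false) :
    (DualCube n).Adj u (Function.update u i (!(u i))) := by
  rw [DualCube, fromRel_adj]
  refine ⟨flip_ne u i, Or.inl ⟨i, ?_, ?_, ?_, ?_⟩⟩
  · simp
  · intro j hj; simp [Function.update_of_ne hj]
  · intro _ j hj
    have hjl : j = ⟨2 * n - 2, by omega⟩ := Fin.ext hj
    have hji : j ≠ i := by intro h; subst h; omega
    rw [Function.update_of_ne hji, hjl]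
    exact ⟨hu, hu⟩
  · intro h1 _; omega

lemma adj_flip_high (hn : 3 ≤ n) (u : DVertex n) (i : Fin (2 * n - 1))
    (hi1 : n - 1 ≤ (i : ℕ)) (hi2 : (i : ℕ) < 2 * n - 2)
    (hu : u ⟨2 * n - 2, by omega⟩ = true) :
    (DualCube n).Adj u (Function.update u i (!(u i))) := by
  rw [DualCube, fromRel_adj]
  refine ⟨flip_ne u i, Or.inl ⟨i, ?_, ?_, ?_, ?_⟩⟩
  · simp
  · intro j hj; simp [Function.update_of_ne hj]
  · intro h1; omega
  · intro _ _ j hj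
    have hjl : j = ⟨2 * n - 2, by omega⟩ := Fin.ext hj
    have hji : j ≠ i := by intro h; subst h; omega
    rw [Function.update_of_ne hji, hjl]
    exact ⟨hu, hu⟩

lemma adj_outside (hn : 3 ≤ n) (u : DVertex n) :
    (DualCube n).Adj u (outsideNeighbour n u) := by
  rw [DualCube, fromRel_adj]
  have hlt : 2 * n - 2 < 2 * n - 1 := by omega
  refine ⟨?_, Or.inl ⟨⟨2 * n - 2, hlt⟩, ?_, ?_, ?_, ?_⟩⟩
  · intro h
    have := congrFun h ⟨2 * n - 2, hlt⟩
    simp [outsideNeighbour] at this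
  · simp [outsideNeighbour]
  · intro j hj
    have h2 : (j : ℕ) ≠ 2 * n - 2 := by
      intro h; exact hj (Fin.ext h)
    simp [outsideNeighbour, h2]
  · exact fun (h : 2 * n - 2 < n - 1) => absurd h (by omega)
  · exact fun _ (h : 2 * n - 2 < 2 * n - 2) => absurd h (by omega)

end Aux
section Aux2
variable {n : ℕ}

lemma mem_self (u : DVertex n) : u ∈ dualCluster n u :=
  ⟨fun _ _ => rfl, fun _ _ _ => rfl, fun _ _ _ => rfl⟩

lemma mem_cluster0 (hn : 3 ≤ n) (a : DVertex n)
    (ha : ∀ j : Fin (2 * n - 1), (j : ℕ) = 2 * n - 2 → a j = false)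
    (v : DVertex n) (hv : ∀ j : Fin (2 * n - 1), n - 1 ≤ (j : ℕ) → v j = a j) :
    v ∈ dualCluster n a := by
  refine ⟨fun j hj => hv j (by omega), fun _ => hv, fun h => ?_⟩
  have h1 := h ⟨2 * n - 2, by omega⟩ rfl
  have h2 := ha ⟨2 * n - 2, by omega⟩ rfl
  rw [h1] at h2
  exact absurd h2 (by simp)

lemma mem_cluster0' (hn : 3 ≤ n) (a : DVertex n)
    (ha : ∀ j : Fin (2 * n - 1), (j : ℕ) = 2 * n - 2 → a j = false)
    (v : DVertex n) (hv : v ∈ dualCluster n a) :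
    ∀ j : Fin (2 * n - 1), n - 1 ≤ (j : ℕ) → v j = a j :=
  hv.2.1 ha

lemma mem_cluster1 (hn : 3 ≤ n) (b : DVertex n)
    (hb : ∀ j : Fin (2 * n - 1), (j : ℕ) = 2 * n - 2 → b j = true)
    (v : DVertex n) (hv : ∀ j : Fin (2 * n - 1), (j : ℕ) < n - 1 → v j = b j)
    (hvl : ∀ j : Fin (2 * n - 1), (j : ℕ) = 2 * n - 2 → v j = b j) :
    v ∈ dualCluster n b := by
  refine ⟨hvl, fun h => ?_, fun _ => hv⟩
  have h1 := h ⟨2 * n - 2, by omega⟩ rfl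
  have h2 := hb ⟨2 * n - 2, by omega⟩ rfl
  rw [h1] at h2
  exact absurd h2 (by simp)

lemma reach_aux (hn : 3 ≤ n) (S : Set (DVertex n)) (u : DVertex n)
    (Q : Fin (2 * n - 1) → Prop) [DecidablePred Q]
    (hS : ∀ w : DVertex n, (∀ j, ¬ Q j → w j = u j) → w ∈ S)
    (hadj : ∀ w : DVertex n, (∀ j, ¬ Q j → w j = u j) →
      ∀ i, Q i → (DualCube n).Adj w (Function.update w i (!(w i))))
    (v : DVertex n) (hv : ∀ j, ¬ Q j → v j = u j) (pu : u ∈ S) (pv : v ∈ S) :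
    ((DualCube n).induce S).Reachable ⟨u, pu⟩ ⟨v, pv⟩ := by
  suffices H : ∀ d : ℕ, ∀ w : DVertex n, ∀ hw : ∀ j, ¬ Q j → w j = u j,
      (Finset.univ.filter (fun j => w j ≠ v j)).card = d →
      ∀ pw : w ∈ S, ((DualCube n).induce S).Reachable ⟨w, pw⟩ ⟨v, pv⟩ by
    exact H _ u (fun _ _ => rfl) rfl pu
  intro d
  induction d with
  | zero =>
    intro w hw h0 pw
    have hwv : w = v := by
      funext j
      by_contra hne
      have : j ∈ Finset.univ.filter (fun j => w j ≠ v j) := by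
        simp [hne]
      rw [Finset.card_eq_zero] at h0
      rw [h0] at this
      exact absurd this (Finset.notMem_empty j)
    subst hwv
    exact Reachable.refl _
  | succ d ih =>
    intro w hw hcard pw
    have hne : (Finset.univ.filter (fun j => w j ≠ v j)).Nonempty := by
      rw [← Finset.card_pos, hcard]; omega
    obtain ⟨i, hi⟩ := hne
    simp only [Finset.mem_filter, Finset.mem_univ, true_and] at hi
    have hQi : Q i := by
      by_contra hQ
      exact hi (by rw [hw i hQ, hv i hQ])
    have hvb : v i = !(w i) := by
      cases h : w i <;> cases h' : v i <;> simp_all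
    set w' := Function.update w i (!(w i)) with hw'def
    have hadjww' : (DualCube n).Adj w w' := hadj w hw i hQi
    have hw' : ∀ j, ¬ Q j → w' j = u j := by
      intro j hQj
      have hji : j ≠ i := fun h => hQj (h ▸ hQi)
      rw [hw'def, Function.update_of_ne hji]
      exact hw j hQj
    have hcard' : (Finset.univ.filter (fun j => w' j ≠ v j)).card = d := by
      have hset : Finset.univ.filter (fun j => w' j ≠ v j)
          = (Finset.univ.filter (fun j => w j ≠ v j)).erase i := by
        ext j
        simp only [Finset.mem_filter, Finset.mem_univ, true_and, Finset.mem_erase]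
        constructor
        · intro hj
          have hji : j ≠ i := by
            intro h; subst h
            rw [hw'def, Function.update_self, ← hvb] at hj
            exact hj rfl
          rw [hw'def, Function.update_of_ne hji] at hj
          exact ⟨hji, hj⟩
        · intro ⟨hji, hj⟩
          rw [hw'def, Function.update_of_ne hji]
          exact hj
      rw [hset, Finset.card_erase_of_mem (by simp [hi]), hcard]; omega
    have pw' : w' ∈ S := hS w' hw'
    have step : ((DualCube n).induce S).Adj ⟨w, pw⟩ ⟨w', pw'⟩ := hadjww'
    exact (step.reachable).trans (ih w' hw' hcard' pw')

end Aux2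
/-- For `n ≥ 3`, the subgraph of `D_n` induced on the union of `k ≥ 1` distinct
clusters of class `0` and `l ≥ 1` distinct clusters of class `1` is connected. -/
theorem induced_union_clusters_connected (n k l : ℕ) (hn : 3 ≤ n)
    (hk : 1 ≤ k) (hl : 1 ≤ l)
    (C0 : Fin k → Set (DVertex n)) (C1 : Fin l → Set (DVertex n))
    (h0 : ∀ i, IsCluster0 n (C0 i)) (h1 : ∀ i, IsCluster1 n (C1 i))
    (hinj0 : Function.Injective C0) (hinj1 : Function.Injective C1) :
    ((DualCube n).induce ((⋃ i, C0 i) ∪ ⋃ i, C1 i)).Connected := by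
  set S : Set (DVertex n) := (⋃ i, C0 i) ∪ ⋃ i, C1 i with hSdef
  obtain ⟨a0, ha0, hC0⟩ := h0 ⟨0, hk⟩
  obtain ⟨b0, hb0, hC1⟩ := h1 ⟨0, hl⟩
  have hsub0 : ∀ i0 : Fin k, ∀ a : DVertex n, C0 i0 = dualCluster n a →
      dualCluster n a ⊆ S := by
    intro i0 a hCeq w hw
    exact Or.inl (Set.mem_iUnion.2 ⟨i0, by rw [hCeq]; exact hw⟩)
  have hsub1 : ∀ i1 : Fin l, ∀ b : DVertex n, C1 i1 = dualCluster n b →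
      dualCluster n b ⊆ S := by
    intro i1 b hCeq w hw
    exact Or.inr (Set.mem_iUnion.2 ⟨i1, by rw [hCeq]; exact hw⟩)
  have hb0S : b0 ∈ S := hsub1 ⟨0, hl⟩ b0 hC1 (mem_self b0)
  have hlastlt : 2 * n - 2 < 2 * n - 1 := by omega
  -- key: any vertex of any class-0 cluster reaches b0
  have key0 : ∀ (z : DVertex n) (i0 : Fin k) (a : DVertex n),
      (∀ j : Fin (2 * n - 1), (j : ℕ) = 2 * n - 2 → a j = false) →
      C0 i0 = dualCluster n a → z ∈ dualCluster n a → ∀ pz : z ∈ S,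
      ((DualCube n).induce S).Reachable ⟨z, pz⟩ ⟨b0, hb0S⟩ := by
    intro z i0 a ha hCeq hz pz
    have hsub : dualCluster n a ⊆ S := hsub0 i0 a hCeq
    have hz_agree : ∀ j : Fin (2 * n - 1), n - 1 ≤ (j : ℕ) → z j = a j :=
      mem_cluster0' hn a ha z hz
    set m : DVertex n := fun j => if (j : ℕ) < n - 1 then b0 j else a j with hmdef
    have hm_hi : ∀ j : Fin (2 * n - 1), n - 1 ≤ (j : ℕ) → m j = a j := by
      intro j hj; simp only [hmdef]; rw [if_neg (by omega)]
    have hm_mem : m ∈ dualCluster n a := mem_cluster0 hn a ha m hm_hi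
    have pm : m ∈ S := hsub hm_mem
    have r1 : ((DualCube n).induce S).Reachable ⟨z, pz⟩ ⟨m, pm⟩ := by
      refine reach_aux hn S z (fun j => (j : ℕ) < n - 1) ?_ ?_ m ?_ pz pm
      · intro w hw
        refine hsub (mem_cluster0 hn a ha w ?_)
        intro j hj
        rw [hw j (by omega), hz_agree j hj]
      · intro w hw i hQi
        refine adj_flip_low hn w i hQi ?_
        rw [hw ⟨2 * n - 2, hlastlt⟩ (by first | (simp; omega) | simp | omega),
          hz_agree ⟨2 * n - 2, hlastlt⟩ (by first | (simp; omega) | simp | omega), ha ⟨2 * n - 2, hlastlt⟩ rfl]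
      · intro j hj
        rw [hm_hi j (by omega), hz_agree j (by omega)]
    set m' : DVertex n := outsideNeighbour n m with hm'def
    have hm'_lo : ∀ j : Fin (2 * n - 1), (j : ℕ) < n - 1 → m' j = b0 j := by
      intro j hj
      simp only [hm'def, outsideNeighbour]
      rw [if_neg (by omega), hmdef]
      simp [hj]
    have hm'_last : ∀ j : Fin (2 * n - 1), (j : ℕ) = 2 * n - 2 → m' j = b0 j := by
      intro j hj
      simp only [hm'def, outsideNeighbour]
      rw [if_pos hj, hm_hi j (by omega), ha j hj, hb0 j hj]
      rfl
    have hm'_mem : m' ∈ dualCluster n b0 := mem_cluster1 hn b0 hb0 m' hm'_lo hm'_last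
    have pm' : m' ∈ S := hsub1 ⟨0, hl⟩ b0 hC1 hm'_mem
    have r2 : ((DualCube n).induce S).Adj ⟨m, pm⟩ ⟨m', pm'⟩ := adj_outside hn m
    have r3 : ((DualCube n).induce S).Reachable ⟨m', pm'⟩ ⟨b0, hb0S⟩ := by
      refine reach_aux hn S m' (fun j => n - 1 ≤ (j : ℕ) ∧ (j : ℕ) < 2 * n - 2)
        ?_ ?_ b0 ?_ pm' hb0S
      · intro w hw
        refine hsub1 ⟨0, hl⟩ b0 hC1 (mem_cluster1 hn b0 hb0 w ?_ ?_)
        · intro j hj; rw [hw j (by omega), hm'_lo j hj]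
        · intro j hj; rw [hw j (by omega), hm'_last j hj]
      · intro w hw i hQi
        refine adj_flip_high hn w i hQi.1 hQi.2 ?_
        rw [hw ⟨2 * n - 2, hlastlt⟩ (by first | (simp; omega) | simp | omega),
          hm'_last ⟨2 * n - 2, hlastlt⟩ rfl, hb0 ⟨2 * n - 2, hlastlt⟩ rfl]
      · intro j hj
        have : (j : ℕ) < n - 1 ∨ (j : ℕ) = 2 * n - 2 := by
          have := j.isLt; omega
        rcases this with h | h
        · rw [hm'_lo j h]
        · rw [hm'_last j h]
    exact r1.trans (r2.reachable.trans r3)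
  -- every vertex of S reaches b0
  have main : ∀ (z : DVertex n) (pz : z ∈ S),
      ((DualCube n).induce S).Reachable ⟨z, pz⟩ ⟨b0, hb0S⟩ := by
    intro z pz
    rcases pz with h | h
    · obtain ⟨i0, hi0⟩ := Set.mem_iUnion.1 h
      obtain ⟨a, ha, hCeq⟩ := h0 i0
      exact key0 z i0 a ha hCeq (by rw [hCeq] at hi0; exact hi0) _
    · obtain ⟨i1, hi1⟩ := Set.mem_iUnion.1 h
      obtain ⟨b, hb, hCeq⟩ := h1 i1
      have hz : z ∈ dualCluster n b := by rw [hCeq] at hi1; exact hi1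
      have pz' : z ∈ S := hsub1 i1 b hCeq hz
      have hz_lo : ∀ j : Fin (2 * n - 1), (j : ℕ) < n - 1 → z j = b j := hz.2.2 hb
      have hz_last : ∀ j : Fin (2 * n - 1), (j : ℕ) = 2 * n - 2 → z j = b j := hz.1
      set m : DVertex n := fun j => if (j : ℕ) < n - 1 then b j else a0 j with hmdef
      have hm_hi : ∀ j : Fin (2 * n - 1), n - 1 ≤ (j : ℕ) → m j = a0 j := by
        intro j hj; simp only [hmdef]; rw [if_neg (by omega)]
      have hm_mem : m ∈ dualCluster n a0 := mem_cluster0 hn a0 ha0 m hm_hi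
      have pm : m ∈ S := hsub0 ⟨0, hk⟩ a0 hC0 hm_mem
      set m' : DVertex n := outsideNeighbour n m with hm'def
      have hm'_lo : ∀ j : Fin (2 * n - 1), (j : ℕ) < n - 1 → m' j = b j := by
        intro j hj
        simp only [hm'def, outsideNeighbour]
        rw [if_neg (by omega), hmdef]
        simp [hj]
      have hm'_last : ∀ j : Fin (2 * n - 1), (j : ℕ) = 2 * n - 2 → m' j = b j := by
        intro j hj
        simp only [hm'def, outsideNeighbour]
        rw [if_pos hj, hm_hi j (by omega), ha0 j hj, hb j hj]
        rfl
      have hm'_mem : m' ∈ dualCluster n b := mem_cluster1 hn b hb m' hm'_lo hm'_last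
      have pm' : m' ∈ S := hsub1 i1 b hCeq hm'_mem
      have r1 : ((DualCube n).induce S).Reachable ⟨z, pz'⟩ ⟨m', pm'⟩ := by
        refine reach_aux hn S z (fun j => n - 1 ≤ (j : ℕ) ∧ (j : ℕ) < 2 * n - 2)
          ?_ ?_ m' ?_ pz' pm'
        · intro w hw
          refine hsub1 i1 b hCeq (mem_cluster1 hn b hb w ?_ ?_)
          · intro j hj; rw [hw j (by omega), hz_lo j hj]
          · intro j hj; rw [hw j (by omega), hz_last j hj]
        · intro w hw i hQi
          refine adj_flip_high hn w i hQi.1 hQi.2 ?_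
          rw [hw ⟨2 * n - 2, hlastlt⟩ (by first | (simp; omega) | simp | omega),
            hz_last ⟨2 * n - 2, hlastlt⟩ rfl, hb ⟨2 * n - 2, hlastlt⟩ rfl]
        · intro j hj
          have : (j : ℕ) < n - 1 ∨ (j : ℕ) = 2 * n - 2 := by
            have := j.isLt; omega
          rcases this with h' | h'
          · rw [hm'_lo j h', hz_lo j h']
          · rw [hm'_last j h', hz_last j h']
      have r2 : ((DualCube n).induce S).Adj ⟨m', pm'⟩ ⟨m, pm⟩ := (adj_outside hn m).symm
      have r3 := key0 m ⟨0, hk⟩ a0 ha0 hC0 hm_mem pm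
      exact r1.trans (r2.reachable.trans r3)
  have hne : Nonempty ↥S := ⟨⟨b0, hb0S⟩⟩
  refine ⟨fun x y => ?_⟩
  obtain ⟨zx, pzx⟩ := x
  obtain ⟨zy, pzy⟩ := y
  exact (main zx pzx).trans (main zy pzy).symm
end

section
/- Let n ≥ 2, let 1 ≤ r ≤ n−1, and let D_n be the n-dimensional dual cube. Let u be a vertex of D_n and let u_1, …, u_r be r distinct neighbours of u lying in the same cluster as u, and set F = N_{D_n}({u_1, …, u_r}), the set of all vertices of D_n outside {u_1, …, u_r} having a neighbour among u_1, …, u_r. Then |F| = rn − r(r+1)/2 + 1, and the graph D_n − F has at least r+1 connected components, at least r of which are singletons. -/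
open SimpleGraph Function

section
open Finset
open scoped symmDiff

namespace DualAux

def flipS (n : ℕ) (u : DVertex n) (s : Finset (Fin (2*n-1))) : DVertex n :=
  fun j => if j ∈ s then !(u j) else u j

lemma flipS_inj (n : ℕ) (u : DVertex n) : Injective (flipS n u) := by
  intro s t h
  ext j
  have := congrFun h j
  by_cases hs : j ∈ s <;> by_cases ht : j ∈ t <;>
    simp [flipS, hs, ht] at this ⊢

lemma flipS_empty (n : ℕ) (u : DVertex n) : flipS n u ∅ = u := by
  ext j; simp [flipS]

lemma flipS_flipS (n : ℕ) (u : DVertex n) (s t : Finset (Fin (2*n-1))) :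
    flipS n (flipS n u s) t = flipS n u (s ∆ t) := by
  ext j
  by_cases hs : j ∈ s <;> by_cases ht : j ∈ t <;>
    simp [flipS, Finset.mem_symmDiff, hs, ht]

lemma symmDiff_singleton {α : Type*} [DecidableEq α] (a q : α) (h : a ≠ q) :
    ({a} : Finset α) ∆ {q} = {a, q} := by
  ext x
  simp only [Finset.mem_symmDiff, Finset.mem_singleton, Finset.mem_insert]
  constructor
  · rintro (⟨rfl,_⟩|⟨rfl,_⟩) <;> tauto
  · rintro (rfl|rfl)
    · exact Or.inl ⟨rfl, h⟩
    · exact Or.inr ⟨rfl, fun hc => h hc.symm⟩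

lemma rel_symm {n : ℕ} {x y : DVertex n} (h : dualCubeRel n x y) : dualCubeRel n y x := by
  obtain ⟨i, h1, h2, h3, h4⟩ := h
  exact ⟨i, h1.symm, fun j hj => (h2 j hj).symm,
    fun hi j hj => ⟨(h3 hi j hj).2, (h3 hi j hj).1⟩,
    fun h h' j hj => ⟨(h4 h h' j hj).2, (h4 h h' j hj).1⟩⟩

lemma adj_iff {n : ℕ} (hn : 2 ≤ n) (x y : DVertex n) (L : Fin (2*n-1)) (hL : (L:ℕ) = 2*n-2) :
    (DualCube n).Adj x y ↔ ∃ i : Fin (2*n-1), y = flipS n x {i} ∧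
      (((i:ℕ) < n-1 ∧ x L = false) ∨ (((n:ℕ)-1 ≤ (i:ℕ) ∧ (i:ℕ) < 2*n-2) ∧ x L = true) ∨
        (i:ℕ) = 2*n-2) := by
  constructor
  · rintro ⟨hne, h⟩
    have h' : dualCubeRel n x y := h.elim id rel_symm
    obtain ⟨i, hi1, hi2, hi3, hi4⟩ := h'
    refine ⟨i, ?_, ?_⟩
    · ext j
      by_cases hj : j = i
      · subst hj
        revert hi1; simp [flipS]; cases x j <;> cases y j <;> simp
      · simp [flipS, hj, (hi2 j hj).symm]
    · by_cases h1 : (i:ℕ) < n-1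
      · exact Or.inl ⟨h1, (hi3 h1 L hL).1⟩
      · by_cases h2 : (i:ℕ) < 2*n-2
        · exact Or.inr (Or.inl ⟨⟨by omega, h2⟩, (hi4 (by omega) h2 L hL).1⟩)
        · exact Or.inr (Or.inr (by have := i.isLt; omega))
  · rintro ⟨i, rfl, hcond⟩
    have hxi : flipS n x {i} i = !(x i) := by simp [flipS]
    have hne : x ≠ flipS n x {i} := by
      intro h
      have := congrFun h i
      rw [hxi] at this
      simp at this
    refine ⟨hne, Or.inl ⟨i, ?_, ?_, ?_, ?_⟩⟩
    · rw [hxi]; cases x i <;> simp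
    · intro j hj; simp [flipS, hj]
    · intro hlt j hj
      have hjL : j = L := Fin.ext (by omega)
      rw [hjL]
      have hxL : x L = false := by
        rcases hcond with ⟨_, h⟩|⟨⟨h,_⟩,_⟩|h
        · exact h
        · omega
        · omega
      have hLi : L ≠ i := by
        intro h; rw [← h] at hlt; omega
      constructor
      · exact hxL
      · simpa [flipS, hLi] using hxL
    · intro hle hlt j hj
      have hjL : j = L := Fin.ext (by omega)
      rw [hjL]
      have hxL : x L = true := by
        rcases hcond with ⟨h, _⟩|⟨_,h⟩|h
        · omega
        · exact h
        · omega
      have hLi : L ≠ i := by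
        intro h; rw [← h] at hlt; omega
      constructor
      · exact hxL
      · simpa [flipS, hLi] using hxL

lemma isolated_supp {V : Type*} (G : SimpleGraph V) (x : V) (h : ∀ y, ¬ G.Adj x y) :
    (G.connectedComponentMk x).supp = {x} := by
  ext y
  simp only [ConnectedComponent.mem_supp_iff, Set.mem_singleton_iff]
  constructor
  · intro hy
    have hr : G.Reachable x y := (ConnectedComponent.eq.mp hy).symm
    obtain ⟨w⟩ := hr
    cases w with
    | nil => rfl
    | cons ha _ => exact absurd ha (h _)
  · rintro rfl; rfl

lemma card_band {m a c : ℕ} (hc : c ≤ m) :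
    (univ.filter fun j : Fin m => a ≤ (j:ℕ) ∧ (j:ℕ) < c).card = c - a := by
  rw [← Nat.card_Ico a c]
  refine Finset.card_bij (fun j _ => (j:ℕ)) ?_ ?_ ?_
  · intro j hj; simp at hj ⊢; omega
  · intro j hj k hk h; exact Fin.ext h
  · intro k hk
    simp at hk
    exact ⟨⟨k, by omega⟩, by simp; omega, rfl⟩

lemma two_mul_choose_two (x : ℕ) : 2 * Nat.choose x 2 = x * (x-1) := by
  rw [Nat.choose_two_right]
  rcases x with _|k
  · simp
  · obtain ⟨c, hc⟩ := Nat.even_mul_succ_self k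
    have h : (k+1) * (k+1-1) = c + c := by rw [Nat.mul_comm]; simpa using hc
    omega

lemma two_choose_two_add (x : ℕ) : 2 * Nat.choose x 2 + x = x * x := by
  have h := two_mul_choose_two x
  cases x with
  | zero => simp
  | succ k =>
    have h2 : (k+1) * (k+1-1) + (k+1) = (k+1)*(k+1) := by simp; ring
    omega

lemma arith_final {n r : ℕ} (hn : 2 ≤ n) (hr : 1 ≤ r) (hrn : r ≤ n-1) :
    1 + (r + (Nat.choose (n-1) 2 - Nat.choose (n-1-r) 2)) = r * n - r * (r + 1) / 2 + 1 := by
  have hA := two_choose_two_add (n-1)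
  have hB := two_choose_two_add (n-1-r)
  have hC : 2 * (r * (r+1) / 2) = r * (r+1) := by
    refine Nat.mul_div_cancel' ?_
    exact (Nat.even_mul_succ_self r).two_dvd
  set s := n - 1 - r with hsdef
  have hs : n - 1 = r + s := by omega
  have hMsq : (n-1) * (n-1) = r*r + 2*(r*s) + s*s := by
    rw [hs]; ring
  have hrm : r * n = r*r + r*s + r := by
    have h1 : n = r + s + 1 := by omega
    rw [h1]; ring
  have hRr : r ≤ r * r := Nat.le_mul_of_pos_left r hr
  have hCr : r * (r+1) = r*r + r := by ring
  set A := Nat.choose (n-1) 2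
  set B := Nat.choose s 2
  set C := r * (r+1) / 2
  set R := r * r
  set T := r * s
  set S2 := s * s
  set M := (n-1) * (n-1)
  set RN := r * n
  set RR1 := r * (r+1)
  omega

end DualAux

open Finset DualAux
open scoped symmDiff

/-- For `n ≥ 2`, `1 ≤ r ≤ n-1`, a vertex `u` of `D_n` and `r` distinct neighbours
`u_1, …, u_r` of `u` in the cluster of `u`, the neighbourhood
`F = N(\{u_1, …, u_r\})` has exactly `rn - r(r+1)/2 + 1` vertices, and `D_n - F`
has at least `r+1` connected components, at least `r` of which are singletons. -/
theorem component_cut_from_neighbourhood (n r : ℕ) (hn : 2 ≤ n) (hr : 1 ≤ r)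
    (hrn : r ≤ n - 1) (u : DVertex n) (us : Fin r → DVertex n)
    (hinj : Function.Injective us)
    (hadj : ∀ i, (DualCube n).Adj u (us i))
    (hcl : ∀ i, us i ∈ dualCluster n u)
    (F : Set (DVertex n))
    (hF : F = { v | v ∉ Set.range us ∧ ∃ i, (DualCube n).Adj (us i) v }) :
    F.ncard = r * n - r * (r + 1) / 2 + 1 ∧
    r + 1 ≤ Nat.card ((DualCube n).induce Fᶜ).ConnectedComponent ∧
    ∃ g : Fin r → ((DualCube n).induce Fᶜ).ConnectedComponent,
      Function.Injective g ∧ ∀ i, (g i).supp.ncard = 1 := by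
  classical
  have hN2 : 2*n-2 < 2*n-1 := by omega
  set L : Fin (2*n-1) := ⟨2*n-2, hN2⟩ with hLdef
  have hL : (L:ℕ) = 2*n-2 := rfl
  set I : Finset (Fin (2*n-1)) := univ.filter
    (fun j => (u L = false ∧ (j:ℕ) < n-1) ∨ (u L = true ∧ n-1 ≤ (j:ℕ) ∧ (j:ℕ) < 2*n-2))
    with hI
  have hLnotI : L ∉ I := by
    simp only [hI, mem_filter, mem_univ, true_and]
    rintro (⟨_, h⟩ | ⟨_, _, h⟩) <;> omega
  have hIcard : I.card = n - 1 := by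
    cases hbv : u L
    · have hIeq : I = univ.filter (fun j : Fin (2*n-1) => 0 ≤ (j:ℕ) ∧ (j:ℕ) < n-1) := by
        ext j; simp [hI, hbv]
      rw [hIeq, card_band (by omega : n-1 ≤ 2*n-1)]
      omega
    · have hIeq : I = univ.filter (fun j : Fin (2*n-1) => n-1 ≤ (j:ℕ) ∧ (j:ℕ) < 2*n-2) := by
        ext j; simp [hI, hbv]
      rw [hIeq, card_band (by omega : 2*n-2 ≤ 2*n-1)]
      omega
  have hus_last : ∀ i, us i L = u L := fun i => (hcl i).1 L hL
  -- adjacency characterisation for vertices with the same last bit as u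
  have hchar : ∀ (w : DVertex n), w L = u L → ∀ v,
      ((DualCube n).Adj w v ↔ ∃ q, v = flipS n w {q} ∧ (q ∈ I ∨ q = L)) := by
    intro w hw v
    rw [adj_iff hn w v L hL]
    constructor
    · rintro ⟨q, hq, hcond⟩
      refine ⟨q, hq, ?_⟩
      rcases hcond with ⟨h1, h2⟩ | ⟨⟨h1, h1'⟩, h2⟩ | h
      · refine Or.inl ?_
        simp only [hI, mem_filter, mem_univ, true_and]
        exact Or.inl ⟨hw ▸ h2, h1⟩
      · refine Or.inl ?_
        simp only [hI, mem_filter, mem_univ, true_and]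
        exact Or.inr ⟨hw ▸ h2, h1, h1'⟩
      · exact Or.inr (Fin.ext (by rw [hL]; exact h))
    · rintro ⟨q, hq, hcond⟩
      refine ⟨q, hq, ?_⟩
      rcases hcond with hqI | rfl
      · simp only [hI, mem_filter, mem_univ, true_and] at hqI
        rcases hqI with ⟨h1, h2⟩ | ⟨h1, h2, h3⟩
        · exact Or.inl ⟨h2, by rw [hw]; exact h1⟩
        · exact Or.inr (Or.inl ⟨⟨h2, h3⟩, by rw [hw]; exact h1⟩)
      · exact Or.inr (Or.inr hL)
  -- the flipped coordinates of the `us i`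
  have hexists : ∀ i : Fin r, ∃ q, us i = flipS n u {q} ∧ q ∈ I := by
    intro i
    obtain ⟨q, hq1, hq2⟩ := (hchar u rfl (us i)).mp (hadj i)
    rcases hq2 with hqI | rfl
    · exact ⟨q, hq1, hqI⟩
    · exfalso
      have h1 := hus_last i
      rw [hq1] at h1
      simp [flipS] at h1
  choose p hp hpI using hexists
  have hpinj : Injective p := by
    intro i j h
    apply hinj
    rw [hp i, hp j, h]
  have hpiL : ∀ i, p i ≠ L := fun i h => hLnotI (h ▸ hpI i)
  have hnbr : ∀ i v, (DualCube n).Adj (us i) v ↔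
      ∃ q, v = flipS n u ({p i} ∆ {q}) ∧ (q ∈ I ∨ q = L) := by
    intro i v
    rw [hchar (us i) (hus_last i) v]
    constructor
    · rintro ⟨q, rfl, hq⟩
      exact ⟨q, by rw [hp, flipS_flipS], hq⟩
    · rintro ⟨q, rfl, hq⟩
      exact ⟨q, by rw [hp, flipS_flipS], hq⟩
  have hcard_sd : ∀ (a q : Fin (2*n-1)), (({a} : Finset (Fin (2*n-1))) ∆ {q}).card ≠ 1 := by
    intro a q
    by_cases h : a = q
    · subst h; simp [symmDiff_self]
    · rw [symmDiff_singleton a q h, Finset.card_pair h]; omega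
  have hnotadj : ∀ i j, ¬ (DualCube n).Adj (us i) (us j) := by
    intro i j hA
    rw [hnbr] at hA
    obtain ⟨q, hq, _⟩ := hA
    rw [hp j] at hq
    have := flipS_inj n u hq
    have hc := hcard_sd (p i) q
    rw [← this] at hc
    simp at hc
  -- the vertices us i survive the deletion of F
  have husF : ∀ i, us i ∉ F := by
    intro i h
    rw [hF] at h
    exact h.1 ⟨i, rfl⟩
  have husFc : ∀ i, us i ∈ Fᶜ := fun i => Set.mem_compl_iff F (us i) |>.mpr (husF i)
  -- isolation in the induced graph
  have hiso : ∀ i (y : ↥Fᶜ), ¬ ((DualCube n).induce Fᶜ).Adj ⟨us i, husFc i⟩ y := by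
    intro i y hA
    obtain ⟨yv, hyv⟩ := y
    have hA' : (DualCube n).Adj (us i) yv := hA
    rw [Set.mem_compl_iff, hF] at hyv
    by_cases hy : yv ∈ Set.range us
    · obtain ⟨j, hj⟩ := hy
      rw [← hj] at hA'
      exact hnotadj i j hA'
    · exact hyv ⟨hy, ⟨i, hA'⟩⟩
  set g : Fin r → ((DualCube n).induce Fᶜ).ConnectedComponent :=
    fun i => ((DualCube n).induce Fᶜ).connectedComponentMk ⟨us i, husFc i⟩ with hg
  have hsupp : ∀ i, (g i).supp = {(⟨us i, husFc i⟩ : ↥Fᶜ)} :=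
    fun i => isolated_supp _ _ (hiso i)
  have hginj : Injective g := by
    intro i j h
    have hmem : (⟨us j, husFc j⟩ : ↥Fᶜ) ∈ (g j).supp := rfl
    rw [← h, hsupp i, Set.mem_singleton_iff] at hmem
    exact (hinj (congrArg Subtype.val hmem)).symm
  -- the extra vertex z
  set z : DVertex n := flipS n u {L} with hz
  have hzF : z ∉ F := by
    intro hzF
    rw [hF] at hzF
    obtain ⟨-, i, hA⟩ := hzF
    rw [hnbr] at hA
    obtain ⟨q, hq, -⟩ := hA
    have := flipS_inj n u hq
    have hc := hcard_sd (p i) q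
    rw [← this] at hc
    simp at hc
  have hzFc : z ∈ Fᶜ := Set.mem_compl_iff F z |>.mpr hzF
  have hzne : ∀ i, z ≠ us i := by
    intro i h
    rw [hp i] at h
    have := flipS_inj n u h
    have : L = p i := by
      have := Finset.mem_singleton.mp (this ▸ Finset.mem_singleton_self L)
      exact this
    exact hpiL i this.symm
  set c0 : ((DualCube n).induce Fᶜ).ConnectedComponent :=
    ((DualCube n).induce Fᶜ).connectedComponentMk ⟨z, hzFc⟩ with hc0
  have hc0ne : ∀ i, c0 ≠ g i := by
    intro i h
    have hmem : (⟨z, hzFc⟩ : ↥Fᶜ) ∈ c0.supp := rfl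
    rw [h, hsupp i, Set.mem_singleton_iff] at hmem
    exact hzne i (congrArg Subtype.val hmem)
  have hcount : r + 1 ≤ Nat.card ((DualCube n).induce Fᶜ).ConnectedComponent := by
    have hfin : Finite ((DualCube n).induce Fᶜ).ConnectedComponent := by
      infer_instance
    set h2 : Fin (r+1) → ((DualCube n).induce Fᶜ).ConnectedComponent :=
      fun k => if hk : (k:ℕ) < r then g ⟨k, hk⟩ else c0 with hh2
    have hinj2 : Injective h2 := by
      intro a b hab
      simp only [hh2] at hab
      by_cases ha : (a:ℕ) < r <;> by_cases hb : (b:ℕ) < r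
      · rw [dif_pos ha, dif_pos hb] at hab
        have := hginj hab
        exact Fin.ext (by simpa using congrArg Fin.val this)
      · rw [dif_pos ha, dif_neg hb] at hab
        exact absurd hab.symm (hc0ne _)
      · rw [dif_neg ha, dif_pos hb] at hab
        exact absurd hab (hc0ne _)
      · exact Fin.ext (by omega)
    calc r + 1 = Nat.card (Fin (r+1)) := by simp
    _ ≤ _ := Nat.card_le_card_of_injective h2 hinj2

  -- cardinality of F
  set Q : Finset (Finset (Fin (2*n-1))) := (I.powersetCard 2).filter (fun s => ∃ i, p i ∈ s) with hQ
  set S : Finset (Finset (Fin (2*n-1))) :=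
    insert ∅ ((univ.image fun i => ({p i, L} : Finset (Fin (2*n-1)))) ∪ Q) with hS
  have hScard2 : ∀ s ∈ (univ.image fun i => ({p i, L} : Finset (Fin (2*n-1)))) ∪ Q, s.card = 2 := by
    intro s hs
    rcases mem_union.mp hs with h1 | h2
    · obtain ⟨i, -, rfl⟩ := mem_image.mp h1
      exact card_pair (hpiL i)
    · exact (mem_powersetCard.mp (mem_filter.mp h2).1).2
  have hFeq : F = ↑(S.image (flipS n u)) := by
    rw [hF]
    ext v
    simp only [Finset.coe_image, Set.mem_image, Finset.mem_coe, Set.mem_setOf_eq]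
    constructor
    · rintro ⟨hv1, i, hv2⟩
      rw [hnbr] at hv2
      obtain ⟨q, rfl, hq⟩ := hv2
      refine ⟨{p i} ∆ {q}, ?_, rfl⟩
      by_cases hqp : q = p i
      · subst hqp
        rw [symmDiff_self]
        simp only [hS]
        exact mem_insert_self _ _
      · rw [symmDiff_singleton _ _ (fun h => hqp h.symm)]
        apply mem_insert_of_mem
        rcases hq with hqI | rfl
        · apply mem_union_right
          rw [hQ, mem_filter, mem_powersetCard]
          refine ⟨⟨?_, card_pair (fun h => hqp h.symm)⟩, ⟨i, mem_insert_self _ _⟩⟩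
          rw [insert_subset_iff, singleton_subset_iff]
          exact ⟨hpI i, hqI⟩
        · exact mem_union_left _ (mem_image.mpr ⟨i, mem_univ i, rfl⟩)
    · rintro ⟨s, hs, rfl⟩
      have hcard_s : s = ∅ ∨ s.card = 2 := by
        rcases mem_insert.mp hs with rfl | hs'
        · exact Or.inl rfl
        · exact Or.inr (hScard2 s hs')
      constructor
      · rintro ⟨j, hj⟩
        rw [hp j] at hj
        have hsj := flipS_inj n u hj
        rcases hcard_s with rfl | h2
        · simpa using hsj
        · rw [← hsj] at h2
          simp at h2
      · rcases mem_insert.mp hs with rfl | hs'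
        · refine ⟨⟨0, hr⟩, ?_⟩
          rw [flipS_empty]
          exact (hadj ⟨0, hr⟩).symm
        · rcases mem_union.mp hs' with h1 | h2
          · obtain ⟨i, -, rfl⟩ := mem_image.mp h1
            refine ⟨i, (hnbr i _).mpr ⟨L, ?_, Or.inr rfl⟩⟩
            rw [symmDiff_singleton _ _ (hpiL i)]
          · have h2' := mem_filter.mp h2
            obtain ⟨hsub, hcard2⟩ := mem_powersetCard.mp h2'.1
            obtain ⟨i, hpis⟩ := h2'.2
            obtain ⟨a, b, hab, rfl⟩ := Finset.card_eq_two.mp hcard2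
            rcases mem_insert.mp hpis with hpa | hpb
            · refine ⟨i, (hnbr i _).mpr ⟨b, ?_, Or.inl (hsub (by simp))⟩⟩
              rw [symmDiff_singleton _ _ (by rw [hpa]; exact hab), hpa]
            · have hpb' : p i = b := mem_singleton.mp hpb
              refine ⟨i, (hnbr i _).mpr ⟨a, ?_, Or.inl (hsub (by simp))⟩⟩
              rw [symmDiff_singleton _ _ (by rw [hpb']; exact hab.symm), hpb',
                Finset.pair_comm]
  set P : Finset (Fin (2*n-1)) := univ.image p with hP
  have hPsub : P ⊆ I := by
    intro x hx
    obtain ⟨i, -, rfl⟩ := mem_image.mp hx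
    exact hpI i
  have hPcard : P.card = r := by
    rw [hP, card_image_of_injective _ hpinj, card_univ, Fintype.card_fin]
  have hQeq : Q = I.powersetCard 2 \ (I \ P).powersetCard 2 := by
    ext s
    simp only [hQ, mem_filter, mem_sdiff, mem_powersetCard]
    constructor
    · rintro ⟨⟨hsub, hc⟩, i, hi⟩
      refine ⟨⟨hsub, hc⟩, ?_⟩
      rintro ⟨hsub', -⟩
      have hmem := hsub' hi
      rw [mem_sdiff] at hmem
      exact hmem.2 (mem_image.mpr ⟨i, mem_univ i, rfl⟩)
    · rintro ⟨⟨hsub, hc⟩, hns⟩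
      refine ⟨⟨hsub, hc⟩, ?_⟩
      by_contra hni
      push_neg at hni
      apply hns
      refine ⟨?_, hc⟩
      intro x hx
      rw [mem_sdiff]
      refine ⟨hsub hx, ?_⟩
      intro hxP
      obtain ⟨i, -, rfl⟩ := mem_image.mp hxP
      exact hni i hx
  have hQcard : Q.card = Nat.choose (n-1) 2 - Nat.choose (n-1-r) 2 := by
    rw [hQeq, card_sdiff_of_subset (powersetCard_mono sdiff_subset), card_powersetCard,
      card_powersetCard, hIcard, card_sdiff_of_subset hPsub, hIcard, hPcard]
  have hdisj : Disjoint (univ.image fun i => ({p i, L} : Finset (Fin (2*n-1)))) Q := by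
    rw [Finset.disjoint_left]
    rintro s h1 h2
    obtain ⟨i, -, rfl⟩ := mem_image.mp h1
    have hsub := (mem_powersetCard.mp (mem_filter.mp h2).1).1
    exact hLnotI (hsub (by simp))
  have hims : (univ.image fun i => ({p i, L} : Finset (Fin (2*n-1)))).card = r := by
    have hinjon : Set.InjOn (fun i => ({p i, L} : Finset (Fin (2*n-1)))) ↑(univ : Finset (Fin r)) := by
      intro i _ j _ h
      simp only at h
      have hm : p i ∈ ({p j, L} : Finset (Fin (2*n-1))) := h ▸ mem_insert_self _ _
      rcases mem_insert.mp hm with h' | h'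
      · exact hpinj h'
      · exact absurd (mem_singleton.mp h') (hpiL i)
    rw [Finset.card_image_of_injOn hinjon, card_univ, Fintype.card_fin]
  have hempty : (∅ : Finset (Fin (2*n-1))) ∉ (univ.image fun i => ({p i, L} : Finset (Fin (2*n-1)))) ∪ Q := by
    intro h
    have := hScard2 _ h
    simp at this
  have hScard : S.card = 1 + (r + Q.card) := by
    rw [hS, card_insert_of_notMem hempty, card_union_of_disjoint hdisj, hims]
    omega
  have hncard : F.ncard = r * n - r * (r + 1) / 2 + 1 := by
    rw [hFeq, Set.ncard_coe_finset, card_image_of_injective _ (flipS_inj n u), hScard, hQcard]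
    exact arith_final hn hr hrn
  exact ⟨hncard, hcount, g, hginj, fun i => by rw [hsupp i]; exact Set.ncard_singleton _⟩


end
end
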